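/- Fix S = k[x₀,…,xₙ, y₀,…,yₖ] with n ≥ k ≥ 0 and B = ⟨x₀,…,xₙ⟩ ∩ ⟨y₀,…,yₖ⟩. Let Δ be the bipyramid over the k-simplex with base vertices v₀,…,vₖ and apexes w₀, w₁, with an lcm-labeling ℓ. Suppose that (up to permutation of the y-variables) there exist positive integers p₀,…,pₖ and monomials m₀,…,mₖ each dividing f := lcm(ℓ(w₀), ℓ(w₁)) with ℓ(vⱼ) = yⱼ^{pⱼ} · mⱼ for all j. Then for d = max(p₀,…,pₖ) and any monomial m with Δ_m equal to the two-point complex {∅,{w₀},{w₁}}, and any 0 ≤ i ≤ n, 0 ≤ j ≤ k, the subcomplex Δ_{m·xᵢ^d·yⱼ^d} contains the vertex vⱼ and is therefore acyclic. -/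
import Mathlib


/-- A (combinatorial) simplicial complex: a downward-closed family of finite
subsets of the vertex type `V`. -/
def IsComplex {V : Type} (Δ : Finset V → Prop) : Prop :=
  ∀ σ τ : Finset V, τ ⊆ σ → Δ σ → Δ τ

/-- The simplicial boundary operator on formal `k`-linear combinations of finite
subsets of `V`, with signs determined by the linear order on `V`. -/
noncomputable def bdry (V : Type) [DecidableEq V] [LinearOrder V]
    (k : Type) [Field k] : (Finset V →₀ k) →ₗ[k] (Finset V →₀ k) :=
  Finsupp.lsum k fun σ => LinearMap.toSpanSingleton k _
    (∑ v ∈ σ, ((-1 : k) ^ ((σ.filter (fun u => u < v)).card)) • Finsupp.single (σ.erase v) (1 : k))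

/-- Vanishing of the reduced simplicial homology `H̃_{n-1}(Δ; k)`: chains in
chain degree `n` are supported on faces of cardinality `n` (so chain degree `n`
corresponds to homological degree `n - 1`, and the empty face sits in chain
degree `0`).  The homology vanishes iff every cycle is a boundary. -/
def HredVanish {V : Type} [DecidableEq V] [LinearOrder V]
    (Δ : Finset V → Prop) (k : Type) [Field k] (n : ℕ) : Prop :=
  ∀ x ∈ Finsupp.supported k k {σ : Finset V | Δ σ ∧ σ.card = n},
    bdry V k x = 0 →
      ∃ y ∈ Finsupp.supported k k {σ : Finset V | Δ σ ∧ σ.card = n + 1},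
        bdry V k y = x

section Cone

variable {V : Type} [DecidableEq V] [LinearOrder V] (k : Type) [Field k]

/-- Sign attached to a vertex of a face. -/
noncomputable def sgn (σ : Finset V) (u : V) : k :=
  ((-1 : k) ^ ((σ.filter (fun x => x < u)).card))

/-- Cone (contracting homotopy) operator associated to a cone apex `v`. -/
noncomputable def coneMap (v : V) : (Finset V →₀ k) →ₗ[k] (Finset V →₀ k) :=
  Finsupp.lsum k fun σ => LinearMap.toSpanSingleton k _
    (if v ∈ σ then 0 else sgn k σ v • Finsupp.single (insert v σ) (1 : k))

lemma coneMap_single (v : V) (σ : Finset V) :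
    coneMap k v (Finsupp.single σ 1) =
      if v ∈ σ then 0 else sgn k σ v • Finsupp.single (insert v σ) (1 : k) := by
  simp [coneMap]

lemma bdry_single (σ : Finset V) :
    bdry V k (Finsupp.single σ 1) =
      ∑ u ∈ σ, sgn k σ u • Finsupp.single (σ.erase u) (1 : k) := by
  simp [bdry, sgn]

lemma card_key (σ : Finset V) {u v : V} (hu : u ∈ σ) (hv : v ∉ σ) :
    (σ.filter (fun x => x < v)).card + ((insert v σ).filter (fun x => x < u)).card
      = (σ.filter (fun x => x < u)).card + ((σ.erase u).filter (fun x => x < v)).card + 1 := by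
  have hne : u ≠ v := fun h => hv (h ▸ hu)
  rw [Finset.filter_insert, Finset.filter_erase]
  rcases lt_or_gt_of_ne hne with h | h
  · rw [if_neg (by simpa using h.le)]
    have hmem : u ∈ σ.filter (fun x => x < v) := Finset.mem_filter.2 ⟨hu, h⟩
    have := Finset.card_erase_of_mem hmem
    have hpos := Finset.card_pos.2 ⟨u, hmem⟩
    omega
  · rw [if_pos h]
    have hns : v ∉ σ.filter (fun x => x < u) := fun hx => hv (Finset.mem_filter.1 hx).1
    rw [Finset.card_insert_of_notMem hns]
    have hnu : u ∉ σ.filter (fun x => x < v) := fun hx => absurd (Finset.mem_filter.1 hx).2 (by simpa using h.le)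
    rw [Finset.erase_eq_of_notMem hnu]
    omega

lemma sgn_mul_sgn (σ : Finset V) (u : V) : sgn k σ u * sgn k σ u = 1 := by
  rw [sgn, ← pow_add]
  exact Even.neg_one_pow ⟨_, rfl⟩

lemma sgn_key (σ : Finset V) {u v : V} (hu : u ∈ σ) (hv : v ∉ σ) :
    sgn k σ v * sgn k (insert v σ) u = -(sgn k σ u * sgn k (σ.erase u) v) := by
  simp only [sgn, ← pow_add, card_key σ hu hv, pow_succ, mul_neg_one, mul_one]

lemma homotopy_single (v : V) (σ : Finset V) :
    bdry V k (coneMap k v (Finsupp.single σ 1)) + coneMap k v (bdry V k (Finsupp.single σ 1))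
      = Finsupp.single σ 1 := by
  rw [bdry_single, map_sum]
  simp only [map_smul, coneMap_single]
  by_cases hv : v ∈ σ
  · rw [if_pos hv, map_zero, zero_add]
    rw [Finset.sum_eq_single_of_mem v hv (fun u hu hne => by
      rw [if_pos (Finset.mem_erase.2 ⟨fun h => hne h.symm, hv⟩), smul_zero])]
    rw [if_neg (Finset.notMem_erase v σ), Finset.insert_erase hv]
    have : (σ.erase v).filter (fun x => x < v) = σ.filter (fun x => x < v) := by
      rw [Finset.filter_erase, Finset.erase_eq_of_notMem (by simp)]
    rw [show sgn k (σ.erase v) v = sgn k σ v by rw [sgn, sgn, this]]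
    rw [smul_smul, sgn_mul_sgn, one_smul]
  · rw [if_neg hv, map_smul, bdry_single, Finset.sum_insert hv]
    have h1 : (insert v σ).erase v = σ := Finset.erase_insert hv
    have h2 : sgn k (insert v σ) v = sgn k σ v := by
      rw [sgn, sgn, Finset.filter_insert, if_neg (lt_irrefl v)]
    rw [h1, h2, smul_add, smul_smul, sgn_mul_sgn, one_smul]
    have h3 : ∀ u ∈ σ, v ∉ σ.erase u := fun u _ h => hv (Finset.mem_of_mem_erase h)
    rw [add_assoc, add_eq_left, Finset.smul_sum, ← Finset.sum_add_distrib]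
    refine Finset.sum_eq_zero fun u hu => ?_
    rw [if_neg (h3 u hu)]
    rw [show (insert v σ).erase u = insert v (σ.erase u) from
      Finset.erase_insert_of_ne (fun h : v = u => hv (h ▸ hu))]
    rw [smul_smul, smul_smul, ← add_smul, sgn_key k σ hu hv, neg_add_cancel, zero_smul]

lemma homotopy (v : V) (x : Finset V →₀ k) :
    bdry V k (coneMap k v x) + coneMap k v (bdry V k x) = x := by
  have : (bdry V k) ∘ₗ (coneMap k v) + (coneMap k v) ∘ₗ (bdry V k) = LinearMap.id := by
    apply Finsupp.lhom_ext
    intro σ b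
    have hb : (Finsupp.single σ b : Finset V →₀ k) = b • Finsupp.single σ 1 := by
      rw [Finsupp.smul_single, smul_eq_mul, mul_one]
    simp only [hb, map_smul, LinearMap.add_apply, LinearMap.comp_apply, LinearMap.id_apply]
    rw [homotopy_single]
  simpa using congrArg (fun f => f x) this

lemma cone_acyclic (Δ : Finset V → Prop) (v : V)
    (hcone : ∀ σ, Δ σ → Δ (insert v σ)) (nn : ℕ) : HredVanish Δ k nn := by
  intro x hx hbx
  refine ⟨coneMap k v x, ?_, ?_⟩
  · rw [Finsupp.supported_eq_span_single] at hx ⊢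
    refine Submodule.span_induction ?_ ?_ ?_ ?_ hx
    · rintro _ ⟨σ, ⟨hσ, hcard⟩, rfl⟩
      rw [coneMap_single]
      by_cases hv : v ∈ σ
      · rw [if_pos hv]; exact Submodule.zero_mem _
      · rw [if_neg hv]
        refine Submodule.smul_mem _ _ (Submodule.subset_span ?_)
        exact ⟨insert v σ, ⟨hcone σ hσ, by rw [Finset.card_insert_of_notMem hv, hcard]⟩, rfl⟩
    · rw [map_zero]; exact Submodule.zero_mem _
    · intro a b _ _ ha hb; rw [map_add]; exact Submodule.add_mem _ ha hb
    · intro c a _ ha; rw [map_smul]; exact Submodule.smul_mem _ _ ha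
  · have := homotopy k v x
    rwa [hbx, map_zero, add_zero] at this

end Cone

namespace Stmt14

/-- Apexes of the bipyramid over a `k`-simplex on vertex set `Fin (k+3)`:
base vertices are `0, …, k`, apexes are `k+1` and `k+2`. -/
def w₀ (k : ℕ) : Fin (k + 3) := ⟨k + 1, by omega⟩

def w₁ (k : ℕ) : Fin (k + 3) := ⟨k + 2, by omega⟩

def base (k : ℕ) (j : Fin (k + 1)) : Fin (k + 3) := ⟨(j : ℕ), by omega⟩

/-- The vertex labels: the base vertex `j` is labeled `yⱼ^{pⱼ} · mⱼ`, the
apexes carry the labels `labw₀`, `labw₁`.  Monomials of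
`S = K[x₀,…,xₙ,y₀,…,y_k]` are encoded by exponent vectors on
`Fin (n+1) ⊕ Fin (k+1)` (`inl i ↦ xᵢ`, `inr j ↦ yⱼ`). -/
def lab (n k : ℕ) (p : Fin (k + 1) → ℕ) (mf : Fin (k + 1) → (Fin (n + 1) ⊕ Fin (k + 1)) → ℕ)
    (labw₀ labw₁ : (Fin (n + 1) ⊕ Fin (k + 1)) → ℕ) (a : Fin (k + 3)) :
    (Fin (n + 1) ⊕ Fin (k + 1)) → ℕ := fun t =>
  if h : (a : ℕ) ≤ k then
    (if t = Sum.inr ⟨(a : ℕ), by omega⟩ then p ⟨(a : ℕ), by omega⟩ else 0) +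
      mf ⟨(a : ℕ), by omega⟩ t
  else if (a : ℕ) = k + 1 then labw₀ t
  else labw₁ t

/-- The subcomplex `Δ_μ` of the lcm-labeled bipyramid: faces not containing
both apexes, all of whose vertex labels divide the monomial `μ`. -/
def Dm (n k : ℕ) (p : Fin (k + 1) → ℕ) (mf : Fin (k + 1) → (Fin (n + 1) ⊕ Fin (k + 1)) → ℕ)
    (labw₀ labw₁ : (Fin (n + 1) ⊕ Fin (k + 1)) → ℕ)
    (μ : (Fin (n + 1) ⊕ Fin (k + 1)) → ℕ) (σ : Finset (Fin (k + 3))) : Prop :=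
  ¬ ({w₀ k, w₁ k} : Finset (Fin (k + 3))) ⊆ σ ∧
    ∀ a ∈ σ, ∀ t, lab n k p mf labw₀ labw₁ a t ≤ μ t

lemma lab_w₀ (n k : ℕ) (p : Fin (k+1) → ℕ) (mf : Fin (k+1) → (Fin (n+1) ⊕ Fin (k+1)) → ℕ)
    (labw₀ labw₁ : (Fin (n+1) ⊕ Fin (k+1)) → ℕ) :
    lab n k p mf labw₀ labw₁ (w₀ k) = labw₀ := by
  funext t; simp [lab, w₀]

lemma lab_w₁ (n k : ℕ) (p : Fin (k+1) → ℕ) (mf : Fin (k+1) → (Fin (n+1) ⊕ Fin (k+1)) → ℕ)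
    (labw₀ labw₁ : (Fin (n+1) ⊕ Fin (k+1)) → ℕ) :
    lab n k p mf labw₀ labw₁ (w₁ k) = labw₁ := by
  funext t; simp [lab, w₁]

lemma lab_base (n k : ℕ) (p : Fin (k+1) → ℕ) (mf : Fin (k+1) → (Fin (n+1) ⊕ Fin (k+1)) → ℕ)
    (labw₀ labw₁ : (Fin (n+1) ⊕ Fin (k+1)) → ℕ) (j : Fin (k+1)) (t : Fin (n+1) ⊕ Fin (k+1)) :
    lab n k p mf labw₀ labw₁ (base k j) t = (if t = Sum.inr j then p j else 0) + mf j t := by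
  have hj : ((base k j : Fin (k+3)) : ℕ) ≤ k := by simp only [base]; omega
  rw [lab, dif_pos hj]
  have he : ∀ h : ((base k j : Fin (k+3)) : ℕ) < k + 1,
      (⟨((base k j : Fin (k+3)) : ℕ), h⟩ : Fin (k+1)) = j := fun h => Fin.ext (by simp [base])
  simp only [he]

/-- Fix `S = K[x₀,…,xₙ,y₀,…,y_k]` with `n ≥ k ≥ 0` and the lcm-labeled
bipyramid over a `k`-simplex with `ℓ(vⱼ) = yⱼ^{pⱼ}·mⱼ` (each `pⱼ ≥ 1`, each
`mⱼ` dividing `f = lcm(ℓ(w₀), ℓ(w₁))`).  Then with `d = max pⱼ`, for any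
monomial `m` with `Δ_m` equal to the two-point complex `{∅, {w₀}, {w₁}}` and
any `i, j`, the subcomplex `Δ_{m·xᵢᵈ·yⱼᵈ}` contains the vertex `vⱼ` and is
therefore acyclic. -/
theorem subcomplex_contains_base_vertex_and_acyclic (K : Type) [Field K]
    (n k : ℕ) (hkn : k ≤ n)
    (p : Fin (k + 1) → ℕ) (hp : ∀ j, 1 ≤ p j)
    (mf : Fin (k + 1) → (Fin (n + 1) ⊕ Fin (k + 1)) → ℕ)
    (labw₀ labw₁ : (Fin (n + 1) ⊕ Fin (k + 1)) → ℕ)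
    (hmf : ∀ j t, mf j t ≤ max (labw₀ t) (labw₁ t))
    (m : (Fin (n + 1) ⊕ Fin (k + 1)) → ℕ)
    (hm : ∀ σ : Finset (Fin (k + 3)), Dm n k p mf labw₀ labw₁ m σ ↔
      (σ = ∅ ∨ σ = {w₀ k} ∨ σ = {w₁ k}))
    (i : Fin (n + 1)) (j : Fin (k + 1)) :
    Dm n k p mf labw₀ labw₁
        (fun t => m t + (if t = Sum.inl i then Finset.univ.sup p else 0) +
          (if t = Sum.inr j then Finset.univ.sup p else 0)) {base k j} ∧
      ∀ nn : ℕ, HredVanish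
        (Dm n k p mf labw₀ labw₁
          (fun t => m t + (if t = Sum.inl i then Finset.univ.sup p else 0) +
            (if t = Sum.inr j then Finset.univ.sup p else 0))) K nn := by
  -- labels of the apexes divide m
  have hw0 : ∀ t, labw₀ t ≤ m t := by
    intro t
    have h := ((hm {w₀ k}).mpr (Or.inr (Or.inl rfl))).2 (w₀ k) (Finset.mem_singleton_self _) t
    rwa [lab_w₀] at h
  have hw1 : ∀ t, labw₁ t ≤ m t := by
    intro t
    have h := ((hm {w₁ k}).mpr (Or.inr (Or.inr rfl))).2 (w₁ k) (Finset.mem_singleton_self _) t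
    rwa [lab_w₁] at h
  have hmm : ∀ t, mf j t ≤ m t := fun t => (hmf j t).trans (max_le (hw0 t) (hw1 t))
  -- the label of the base vertex divides the enlarged monomial
  have hlab : ∀ t, lab n k p mf labw₀ labw₁ (base k j) t ≤
      m t + (if t = Sum.inl i then Finset.univ.sup p else 0) +
        (if t = Sum.inr j then Finset.univ.sup p else 0) := by
    intro t
    rw [lab_base]
    by_cases ht : t = Sum.inr j
    · rw [if_pos ht, if_pos ht, if_neg (by simp [ht])]
      have : p j ≤ Finset.univ.sup p := Finset.le_sup (Finset.mem_univ j)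
      have := hmm t
      omega
    · rw [if_neg ht]
      have := hmm t
      have h1 : (0:ℕ) ≤ (if t = Sum.inl i then Finset.univ.sup p else 0) := Nat.zero_le _
      rw [if_neg ht]
      omega
  have hne0 : w₀ k ≠ base k j := by
    simp only [w₀, base, Fin.ne_iff_vne]
    omega
  have hne1 : w₁ k ≠ base k j := by
    simp only [w₁, base, Fin.ne_iff_vne]
    omega
  have hcone : ∀ σ, Dm n k p mf labw₀ labw₁
        (fun t => m t + (if t = Sum.inl i then Finset.univ.sup p else 0) +
          (if t = Sum.inr j then Finset.univ.sup p else 0)) σ →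
      Dm n k p mf labw₀ labw₁
        (fun t => m t + (if t = Sum.inl i then Finset.univ.sup p else 0) +
          (if t = Sum.inr j then Finset.univ.sup p else 0)) (insert (base k j) σ) := by
    rintro σ ⟨hsub, hdiv⟩
    constructor
    · intro hss
      refine hsub fun a ha => ?_
      have := hss ha
      rcases Finset.mem_insert.1 this with h | h
      · exfalso
        rcases Finset.mem_insert.1 ha with rfl | ha'
        · exact hne0 h
        · rw [Finset.mem_singleton] at ha'
          exact hne1 (ha' ▸ h)
      · exact h
    · intro a ha t
      rcases Finset.mem_insert.1 ha with rfl | ha'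
      · exact hlab t
      · exact hdiv a ha' t
  refine ⟨⟨?_, ?_⟩, ?_⟩
  · intro hss
    have := hss (Finset.mem_insert_self _ _)
    rw [Finset.mem_singleton] at this
    exact hne0 this
  · intro a ha t
    rw [Finset.mem_singleton] at ha
    subst ha
    exact hlab t
  · intro nn
    exact cone_acyclic K _ (base k j) hcone nn

end Stmt14
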